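/- arXiv:2305.07779 — 2 statements merged into one kernel-verified Lean document; each statement's English description precedes it below -/
import Mathlib

section
/- Let X be a random variable taking values in a finite set X of size q with posterior pmf Ψ = (P(X = x | Y))_{x ∈ X} given an observation Y, where X is uniform on X. Then the mutual information satisfies I(X; Y) ≤ log_q(q · ∑_x E[Ψ_x²]) = log_q tr(Q), where Q_{x,x'} = q · E[Ψ_x Ψ_{x'}] is the overlap matrix. -/
/-- With a uniform prior, mutual information in qits satisfies
`I(X;Y) = E[∑ₓ Ψₓ log_q(q Ψₓ)] ≤ log_q(q ∑ₓ E[Ψₓ²]) = log_q tr(Q)`,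
where `Ψ` is the (random) posterior pmf of `X` given `Y`.  Here the outcome
space of `Y` is a finite set `Ω` with probability weights `w`. -/
theorem stmt_8 (q : ℕ) (hq : 2 ≤ q) (Ω : Type*) [Fintype Ω]
    (w : Ω → ℝ) (hw0 : ∀ ω, 0 ≤ w ω) (hw1 : ∑ ω, w ω = 1)
    (Ψ : Ω → Fin q → ℝ)
    (hΨ0 : ∀ ω x, 0 ≤ Ψ ω x) (hΨ1 : ∀ ω, ∑ x, Ψ ω x = 1) :
    ∑ ω, w ω * ∑ x, Ψ ω x * Real.logb q (q * Ψ ω x) ≤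
      Real.logb q (q * ∑ x, ∑ ω, w ω * (Ψ ω x) ^ 2) := by
  have hq1 : (1:ℝ) < q := by exact_mod_cast lt_of_lt_of_le one_lt_two hq
  have hlogq : 0 < Real.log q := Real.log_pos hq1
  set s : Finset (Ω × Fin q) := Finset.univ.filter (fun p => 0 < w p.1 * Ψ p.1 p.2)
    with hs
  have hoff : ∀ p : Ω × Fin q, p ∉ s → w p.1 * Ψ p.1 p.2 = 0 := by
    intro p hp
    have := Finset.mem_filter.not.mp hp
    push_neg at this
    have h := this (Finset.mem_univ p)
    have : 0 ≤ w p.1 * Ψ p.1 p.2 := mul_nonneg (hw0 _) (hΨ0 _ _)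
    linarith
  have ha0 : ∀ p ∈ s, (0:ℝ) ≤ w p.1 * Ψ p.1 p.2 := fun p _ =>
    mul_nonneg (hw0 _) (hΨ0 _ _)
  have ha1 : ∑ p ∈ s, w p.1 * Ψ p.1 p.2 = 1 := by
    rw [Finset.sum_subset (Finset.filter_subset _ _) (fun p _ hp => hoff p hp)]
    rw [Fintype.sum_prod_type]
    simp only [← Finset.mul_sum, hΨ1, mul_one]
    exact hw1
  have hΨpos : ∀ p ∈ s, 0 < Ψ p.1 p.2 := by
    intro p hp
    have h := (Finset.mem_filter.mp hp).2
    by_contra hc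
    push_neg at hc
    have : Ψ p.1 p.2 = 0 := le_antisymm hc (hΨ0 _ _)
    rw [this, mul_zero] at h
    exact lt_irrefl 0 h
  -- Jensen
  have jensen : ∑ p ∈ s, (w p.1 * Ψ p.1 p.2) * Real.log (q * Ψ p.1 p.2) ≤
      Real.log (∑ p ∈ s, (w p.1 * Ψ p.1 p.2) * (q * Ψ p.1 p.2)) := by
    have hconc : ConcaveOn ℝ (Set.Ioi 0) Real.log :=
      strictConcaveOn_log_Ioi.concaveOn
    have := hconc.le_map_sum (t := s) (w := fun p => w p.1 * Ψ p.1 p.2)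
      (p := fun p => (q : ℝ) * Ψ p.1 p.2) ha0 ha1
      (fun p hp => Set.mem_Ioi.mpr (mul_pos (by positivity) (hΨpos p hp)))
    simpa [smul_eq_mul] using this
  have hsum_eq : ∑ p ∈ s, (w p.1 * Ψ p.1 p.2) * ((q:ℝ) * Ψ p.1 p.2) =
      q * ∑ x, ∑ ω, w ω * (Ψ ω x) ^ 2 := by
    rw [Finset.sum_subset (Finset.filter_subset _ _)
      (by intro p _ hp; rw [hoff p hp, zero_mul])]
    rw [Fintype.sum_prod_type, Finset.sum_comm, Finset.mul_sum]
    congr 1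
    ext x
    rw [Finset.mul_sum]
    congr 1
    ext ω
    ring
  have hLHS : ∑ ω, w ω * ∑ x, Ψ ω x * Real.logb q (q * Ψ ω x) =
      (∑ p ∈ s, (w p.1 * Ψ p.1 p.2) * Real.log (q * Ψ p.1 p.2)) / Real.log q := by
    rw [Finset.sum_div]
    rw [Finset.sum_subset (Finset.filter_subset _ _)
      (by intro p _ hp; rw [hoff p hp, zero_mul, zero_div])]
    rw [Fintype.sum_prod_type]
    congr 1
    ext ω
    rw [Finset.mul_sum]
    congr 1
    ext x
    rw [Real.logb]
    ring
  rw [hLHS, Real.logb, ← hsum_eq]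
  gcongr
end

section
/- Define the rate R_q(r,m) = |{d ∈ {0,...,q−1}^m : ∑_i d_i ≤ r}| / q^m. For integers q ≥ 2, 0 ≤ r ≤ m(q−1), and 0 ≤ k < m, the rates satisfy R_q(r, m−k) − R_q(r, m) ≤ 4k/√(m−k). -/
open Finset



private lemma cb_sq (u : ℕ) : (Nat.centralBinom u)^2 * (2*u+1) ≤ 16^u := by
  induction u with
  | zero => simp [Nat.centralBinom]
  | succ u ih =>
    have key := Nat.succ_mul_centralBinom_succ u
    have h4 : (u+1)^2 * ((Nat.centralBinom (u+1))^2 * (2*(u+1)+1)) ≤ (u+1)^2 * 16^(u+1) := by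
      calc (u+1)^2 * ((Nat.centralBinom (u+1))^2 * (2*(u+1)+1))
          = (2*(u+1)+1) * ((u+1) * Nat.centralBinom (u+1))^2 := by ring
        _ = (2*(u+1)+1) * (2*(2*u+1) * Nat.centralBinom u)^2 := by rw [key]
        _ = (4*(2*u+1)*(2*u+3)) * ((Nat.centralBinom u)^2 * (2*u+1)) := by ring
        _ ≤ (16*(u+1)^2) * 16^u := Nat.mul_le_mul (by nlinarith) ih
        _ = (u+1)^2 * 16^(u+1) := by ring
    exact Nat.le_of_mul_le_mul_left h4 (by positivity)

private lemma choose_half_sq (t : ℕ) : (t.choose (t/2))^2 * (t+1) ≤ 4^t := by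
  rcases Nat.even_or_odd t with ⟨u, hu⟩ | ⟨u, hu⟩
  · have ht2 : t/2 = u := by omega
    have h2 : t.choose (t/2) = Nat.centralBinom u := by
      rw [ht2, hu, Nat.centralBinom, two_mul]
    rw [h2]
    have h16 : (4:ℕ)^t = 16^u := by
      rw [hu, pow_add]; norm_num [← mul_pow]
    rw [h16]
    calc Nat.centralBinom u ^ 2 * (t+1) = Nat.centralBinom u ^2 * (2*u+1) := by rw [hu]; ring_nf
      _ ≤ 16^u := cb_sq u
  · have ht2 : t/2 = u := by omega
    have hsym : t.choose (u+1) = t.choose u := by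
      have h1 : t - (u+1) = u := by omega
      rw [← Nat.choose_symm (by omega : u + 1 ≤ t), h1]
    have hdbl : Nat.centralBinom (u+1) = 2 * t.choose u := by
      have hp : (t+1).choose (u+1) = t.choose u + t.choose (u+1) := Nat.choose_succ_succ' t u
      have h21 : 2*(u+1) = t + 1 := by omega
      rw [Nat.centralBinom, h21, hp, hsym, two_mul]
    have hcb := cb_sq (u+1)
    rw [hdbl] at hcb
    -- hcb : (2 * t.choose u)^2 * (2*(u+1)+1) ≤ 16^(u+1)
    have h16 : (16:ℕ)^(u+1) = 4 * 4^t := by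
      rw [hu]
      have : (16:ℕ) = 4^2 := by norm_num
      rw [this, ← pow_mul]
      rw [show 2*(u+1) = (2*u+1)+1 by ring, pow_succ]
      ring
    rw [ht2]
    have h4 : 4 * (t.choose u ^2 * (t+1)) ≤ 4 * 4^t := by
      calc 4 * (t.choose u ^2 * (t+1)) = (2 * t.choose u)^2 * (t+1) := by ring
        _ ≤ (2 * t.choose u)^2 * (2*(u+1)+1) := by
            apply Nat.mul_le_mul_left; omega
        _ ≤ 16^(u+1) := hcb
        _ = 4 * 4^t := h16
    exact Nat.le_of_mul_le_mul_left h4 (by norm_num)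

private lemma choose_half_le (t : ℕ) : (t.choose (t/2) : ℝ) ≤ 2^t / Real.sqrt (t+1) := by
  have h := choose_half_sq t
  have hcast : ((t.choose (t/2) : ℝ))^2 * ((t:ℝ)+1) ≤ 4^t := by exact_mod_cast h
  have hs : (0:ℝ) < Real.sqrt ((t:ℝ)+1) := Real.sqrt_pos.2 (by positivity)
  rw [le_div_iff₀ hs]
  have hnn : (0:ℝ) ≤ (t.choose (t/2) : ℝ) * Real.sqrt ((t:ℝ)+1) := by positivity
  have hsq : ((t.choose (t/2) : ℝ) * Real.sqrt ((t:ℝ)+1))^2 ≤ ((2:ℝ)^t)^2 := by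
    rw [mul_pow, Real.sq_sqrt (by positivity : (0:ℝ) ≤ (t:ℝ)+1)]
    calc (t.choose (t/2):ℝ)^2 * ((t:ℝ)+1) ≤ (4:ℝ)^t := hcast
      _ = ((2:ℝ)^t)^2 := by rw [← pow_mul, mul_comm, pow_mul]; norm_num
  calc (t.choose (t/2):ℝ) * Real.sqrt ((t:ℝ)+1)
      = Real.sqrt (((t.choose (t/2):ℝ) * Real.sqrt ((t:ℝ)+1))^2) := (Real.sqrt_sq hnn).symm
    _ ≤ Real.sqrt (((2:ℝ)^t)^2) := Real.sqrt_le_sqrt hsq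
    _ = 2^t := Real.sqrt_sq (by positivity)



private lemma window_card_le (s k K r c N : ℕ) (hK : K ≤ k * (2*s)) :
    ((Finset.range N).filter (fun j => r < c + s*j + K ∧ c + s*j ≤ r)).card ≤ 2*k := by
  set F := (Finset.range N).filter (fun j => r < c + s*j + K ∧ c + s*j ≤ r) with hF
  rcases F.eq_empty_or_nonempty with h | h
  · simp [h]
  · have hsub : F ⊆ Finset.Ico (F.min' h) (F.min' h + 2*k) := by
      intro j hj
      have h1 := F.min'_le j hj
      have hj0 := F.min'_mem h
      have hj' : r < c + s*j + K ∧ c + s*j ≤ r := (Finset.mem_filter.1 hj).2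
      have hj0' : r < c + s*(F.min' h) + K ∧ c + s*(F.min' h) ≤ r := (Finset.mem_filter.1 hj0).2
      refine Finset.mem_Ico.2 ⟨h1, ?_⟩
      have hmul : s * j < s * (F.min' h + 2*k) := by nlinarith [hj'.2, hj0'.1, hj'.1]
      exact Nat.lt_of_mul_lt_mul_left hmul
    calc F.card ≤ (Finset.Ico (F.min' h) (F.min' h + 2*k)).card := Finset.card_le_card hsub
      _ = 2*k := by rw [Nat.card_Ico]; omega

private lemma pi_sum_card_le (n s j : ℕ) (I : Finset (Fin n)) :
    ((Fintype.piFinset (fun i : Fin n => if i ∈ I then ({0,1} : Finset ℕ) else {0})).filter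
      (fun b => ∑ i, b i = j)).card ≤ I.card.choose j := by
  rw [← Finset.card_powersetCard j I]
  apply Finset.card_le_card_of_injOn (fun b => Finset.univ.filter (fun i => b i = 1))
  · intro b hb
    simp only [Finset.mem_coe, Finset.mem_filter, Fintype.mem_piFinset] at hb
    obtain ⟨hmem, hsum⟩ := hb
    have hb01 : ∀ i, (i ∈ I ∧ (b i = 0 ∨ b i = 1)) ∨ (i ∉ I ∧ b i = 0) := by
      intro i
      by_cases hi : i ∈ I
      · have := hmem i; rw [if_pos hi] at this; simp at this; exact Or.inl ⟨hi, this⟩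
      · have := hmem i; rw [if_neg hi] at this; simp at this; exact Or.inr ⟨hi, this⟩
    refine Finset.mem_powersetCard.2 ⟨?_, ?_⟩
    · intro i hi
      simp only [Finset.mem_filter, Finset.mem_univ, true_and] at hi
      rcases hb01 i with ⟨hI, _⟩ | ⟨_, h0⟩
      · exact hI
      · omega
    · rw [Finset.card_filter, ← hsum]
      apply Finset.sum_congr rfl
      intro i _
      rcases hb01 i with ⟨_, h01⟩ | ⟨_, h0⟩ <;> rcases em (b i = 1) with h|h <;> simp [h] <;> omega
  · intro b hb b' hb' heq
    simp only [Finset.coe_filter, Fintype.mem_piFinset] at hb hb'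
    funext i
    have e1 : (i ∈ Finset.univ.filter (fun i => b i = 1)) ↔ (i ∈ Finset.univ.filter (fun i => b' i = 1)) := by
      have heq' : Finset.univ.filter (fun i => b i = 1) = Finset.univ.filter (fun i => b' i = 1) := heq
      rw [heq']
    simp only [Finset.mem_filter, Finset.mem_univ, true_and] at e1
    have h1 : b i ∈ (if i ∈ I then ({0,1} : Finset ℕ) else {0}) := hb.1 i
    have h2 : b' i ∈ (if i ∈ I then ({0,1} : Finset ℕ) else {0}) := hb'.1 i
    have hv1 : b i = 0 ∨ b i = 1 := by split at h1 <;> simp at h1 <;> omega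
    have hv2 : b' i = 0 ∨ b' i = 1 := by split at h2 <;> simp at h2 <;> omega
    rcases hv1 with h|h <;> rcases hv2 with h'|h' <;> simp [h, h'] at e1 ⊢ <;> omega



private lemma B_window_card_le (n s k K r c : ℕ) (hK : K ≤ k * (2*s)) (I : Finset (Fin n)) :
    ((Fintype.piFinset (fun i : Fin n => if i ∈ I then ({0,1} : Finset ℕ) else {0})).filter
        (fun b => r < c + s * (∑ i, b i) + K ∧ c + s * (∑ i, b i) ≤ r)).card
      ≤ 2*k * (I.card.choose (I.card/2)) := by
  set B := Fintype.piFinset (fun i : Fin n => if i ∈ I then ({0,1} : Finset ℕ) else {0}) with hB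
  set W : (Fin n → ℕ) → Prop := fun b => r < c + s * (∑ i, b i) + K ∧ c + s * (∑ i, b i) ≤ r with hW
  have hble : ∀ b ∈ B, ∀ i, b i ≤ 1 := by
    intro b hb i
    have := Fintype.mem_piFinset.1 hb i
    split at this <;> simp at this <;> omega
  have hmap : ∀ b ∈ B.filter W, (∑ i, b i) ∈ Finset.range (n+1) := by
    intro b hb
    rw [Finset.mem_filter] at hb
    rw [Finset.mem_range]
    calc ∑ i, b i ≤ ∑ _i : Fin n, 1 := Finset.sum_le_sum (fun i _ => hble b hb.1 i)
      _ = n := by simp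
      _ < n+1 := by omega
  rw [Finset.card_eq_sum_card_fiberwise hmap]
  have hper : ∀ j ∈ Finset.range (n+1),
      ((B.filter W).filter (fun b => ∑ i, b i = j)).card
        ≤ if (r < c + s*j + K ∧ c + s*j ≤ r) then I.card.choose (I.card/2) else 0 := by
    intro j _
    by_cases hWj : r < c + s*j + K ∧ c + s*j ≤ r
    · rw [if_pos hWj]
      calc ((B.filter W).filter (fun b => ∑ i, b i = j)).card
          ≤ (B.filter (fun b => ∑ i, b i = j)).card := by
            apply Finset.card_le_card
            intro b hb
            rw [Finset.mem_filter] at *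
            exact ⟨(Finset.mem_filter.1 hb.1).1, hb.2⟩
        _ ≤ I.card.choose j := pi_sum_card_le n s j I
        _ ≤ I.card.choose (I.card/2) := Nat.choose_le_middle j I.card
    · rw [if_neg hWj]
      rw [Nat.le_zero, Finset.card_eq_zero, Finset.filter_eq_empty_iff]
      intro b hb
      rw [Finset.mem_filter, hW] at hb
      intro hsum
      obtain ⟨h1, h2⟩ := hb.2
      rw [hsum] at h1 h2
      exact hWj ⟨h1, h2⟩
  calc ∑ j ∈ Finset.range (n+1), ((B.filter W).filter (fun b => ∑ i, b i = j)).card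
      ≤ ∑ j ∈ Finset.range (n+1), if (r < c + s*j + K ∧ c + s*j ≤ r) then I.card.choose (I.card/2) else 0 :=
        Finset.sum_le_sum hper
    _ = ((Finset.range (n+1)).filter (fun j => r < c + s*j + K ∧ c + s*j ≤ r)).card * (I.card.choose (I.card/2)) := by
        rw [← Finset.sum_filter, Finset.sum_const, smul_eq_mul]
    _ ≤ 2*k * (I.card.choose (I.card/2)) := by
        apply Nat.mul_le_mul_right
        exact window_card_le s k K r c (n+1) hK



private lemma fiber_card_le (q s k K r : ℕ) {n : ℕ} (hq : 2 ≤ q) (hs : s = q / 2)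
    (hK : K ≤ k * (q-1)) (a : Fin n → ℕ) (ha : ∀ i, a i ≤ s) :
    (Finset.univ.filter (fun d : Fin n → Fin q =>
        (r < (∑ i, (d i:ℕ)) + K ∧ (∑ i, (d i:ℕ)) ≤ r) ∧
        (fun i => if (d i:ℕ) < 2*s then (d i:ℕ) % s else s) = a)).card
      ≤ (q % 2)^(n - (Finset.univ.filter (fun i => a i < s)).card) *
        (2*k * ((Finset.univ.filter (fun i => a i < s)).card.choose
                ((Finset.univ.filter (fun i => a i < s)).card / 2))) := by
  have hs1 : 1 ≤ s := by omega
  have hq2 : q = 2*s + q % 2 := by omega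
  set I := Finset.univ.filter (fun i : Fin n => a i < s) with hI
  set Fib := Finset.univ.filter (fun d : Fin n → Fin q =>
        (r < (∑ i, (d i:ℕ)) + K ∧ (∑ i, (d i:ℕ)) ≤ r) ∧
        (fun i => if (d i:ℕ) < 2*s then (d i:ℕ) % s else s) = a) with hFib
  rcases Fib.eq_empty_or_nonempty with hemp | ⟨d₀, hd₀⟩
  · rw [hemp]; simp
  have key2 : ∀ d ∈ Fib, ∀ i : Fin n, ¬ (a i < s) → ¬ ((d i:ℕ) < 2*s) := by
    intro d hd i hai hlt
    have hphi := congrFun (Finset.mem_filter.1 hd).2.2 i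
    rw [if_pos hlt] at hphi
    have := Nat.mod_lt (d i : ℕ) (show 0 < s by omega)
    omega
  have He : (∀ i, a i < s) ∨ q % 2 = 1 := by
    by_cases hall : ∀ i, a i < s
    · exact Or.inl hall
    · push_neg at hall
      obtain ⟨i, hi⟩ := hall
      have h2 := key2 d₀ hd₀ i (by omega)
      have := (d₀ i).isLt
      right; omega
  have key : ∀ d ∈ Fib, ∀ i : Fin n, (d i : ℕ) =
      (if a i < s then a i else q-1) + s * (if s ≤ (d i:ℕ) ∧ (d i:ℕ) < 2*s then 1 else 0) := by
    intro d hd i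
    have hphi := congrFun (Finset.mem_filter.1 hd).2.2 i
    have hdi : (d i : ℕ) < q := (d i).isLt
    by_cases h2 : (d i:ℕ) < 2*s
    · rw [if_pos h2] at hphi
      have hais : a i < s := by
        rw [← hphi]; exact Nat.mod_lt _ (by omega)
      rw [if_pos hais]
      by_cases h1 : s ≤ (d i:ℕ)
      · rw [if_pos ⟨h1, h2⟩]
        rw [Nat.mod_eq_sub_mod h1, Nat.mod_eq_of_lt (by omega)] at hphi
        omega
      · rw [if_neg (by tauto : ¬(s ≤ (d i:ℕ) ∧ (d i:ℕ) < 2*s))]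
        rw [Nat.mod_eq_of_lt (by omega)] at hphi
        omega
    · rw [if_neg h2] at hphi
      have hnais : ¬ (a i < s) := by omega
      rw [if_neg hnais, if_neg (by tauto : ¬(s ≤ (d i:ℕ) ∧ (d i:ℕ) < 2*s))]
      have he' : q % 2 = 1 := by
        rcases He with hall | h1
        · exact absurd (hall i) hnais
        · exact h1
      omega
  have hsum : ∀ d ∈ Fib, (∑ i, (d i:ℕ)) =
      (∑ i, if a i < s then a i else q-1)
        + s * (∑ i, (if s ≤ (d i:ℕ) ∧ (d i:ℕ) < 2*s then 1 else 0)) := by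
    intro d hd
    rw [Finset.mul_sum, ← Finset.sum_add_distrib]
    exact Finset.sum_congr rfl (fun i _ => key d hd i)
  have hK' : K ≤ k * (2*s) := le_trans hK (Nat.mul_le_mul_left k (by omega))
  set c := ∑ i : Fin n, (if a i < s then a i else q-1) with hc
  have hcard : Fib.card ≤ 2*k*(I.card.choose (I.card/2)) := by
    refine le_trans (Finset.card_le_card_of_injOn
      (fun d i => if s ≤ (d i:ℕ) ∧ (d i:ℕ) < 2*s then 1 else 0) ?_ ?_)
      (B_window_card_le n s k K r c hK' I)
    · intro d hd
      rw [Finset.mem_coe] at hd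
      rw [Finset.mem_coe, Finset.mem_filter]
      refine ⟨?_, ?_, ?_⟩
      · rw [Fintype.mem_piFinset]
        intro i
        beta_reduce
        by_cases hai : a i < s
        · rw [if_pos (by rw [hI]; simp [hai] : i ∈ I)]
          split <;> simp
        · rw [if_neg (by rw [hI]; simp [hai] : ¬ (i ∈ I))]
          rw [if_neg (fun hco => key2 d hd i hai hco.2)]
          simp
      · rw [← hsum d hd]
        exact (Finset.mem_filter.1 hd).2.1.1
      · rw [← hsum d hd]
        exact (Finset.mem_filter.1 hd).2.1.2
    · intro d hd d' hd' heq
      rw [Finset.mem_coe] at hd hd'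
      funext i
      have h1 := key d hd i
      have h2 := key d' hd' i
      have hψ := congrFun heq i
      simp only [] at hψ
      rw [hψ] at h1
      exact Fin.val_injective (h1.trans h2.symm)
  rcases He with hall | hodd
  · have htn : I.card = n := by
      have : I = Finset.univ := by
        ext i; simp [hI, hall i]
      rw [this, Finset.card_univ, Fintype.card_fin]
    rw [htn, Nat.sub_self, pow_zero, one_mul]
    rw [htn] at hcard
    exact hcard
  · rw [hodd, one_pow, one_mul]
    exact hcard


private lemma pattern_card (n s t : ℕ) (ht : t ≤ n) :
    ((Fintype.piFinset (fun _ : Fin n => Finset.range (s+1))).filter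
      (fun a => (Finset.univ.filter (fun i => a i < s)).card = t)).card = n.choose t * s^t := by
  have hmap : ∀ a ∈ (Fintype.piFinset (fun _ : Fin n => Finset.range (s+1))).filter
      (fun a => (Finset.univ.filter (fun i => a i < s)).card = t),
      (Finset.univ.filter (fun i => a i < s)) ∈ Finset.powersetCard t (Finset.univ : Finset (Fin n)) := by
    intro a ha
    rw [Finset.mem_filter] at ha
    exact Finset.mem_powersetCard.2 ⟨Finset.filter_subset _ _, ha.2⟩
  rw [Finset.card_eq_sum_card_fiberwise hmap]
  have hper : ∀ I ∈ Finset.powersetCard t (Finset.univ : Finset (Fin n)),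
      (((Fintype.piFinset (fun _ : Fin n => Finset.range (s+1))).filter
        (fun a => (Finset.univ.filter (fun i => a i < s)).card = t)).filter
        (fun a => Finset.univ.filter (fun i => a i < s) = I)).card = s^t := by
    intro I hI
    have hIc : I.card = t := (Finset.mem_powersetCard.1 hI).2
    have hset : (((Fintype.piFinset (fun _ : Fin n => Finset.range (s+1))).filter
        (fun a => (Finset.univ.filter (fun i => a i < s)).card = t)).filter
        (fun a => Finset.univ.filter (fun i => a i < s) = I))
        = Fintype.piFinset (fun i : Fin n => if i ∈ I then Finset.range s else {s}) := by
      ext a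
      simp only [Finset.mem_filter, Fintype.mem_piFinset, Finset.mem_range]
      constructor
      · rintro ⟨⟨hpi, -⟩, hIa⟩
        intro i
        by_cases hi : i ∈ I
        · rw [if_pos hi]
          rw [← hIa] at hi
          simp only [Finset.mem_filter, Finset.mem_univ, true_and] at hi
          exact Finset.mem_range.2 hi
        · rw [if_neg hi]
          rw [← hIa] at hi
          simp only [Finset.mem_filter, Finset.mem_univ, true_and, not_lt] at hi
          have := hpi i
          simp only [Finset.mem_singleton]
          omega
      · intro hB
        have hIa : Finset.univ.filter (fun i => a i < s) = I := by
          ext i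
          simp only [Finset.mem_filter, Finset.mem_univ, true_and]
          constructor
          · intro hlt
            by_contra hi
            have := hB i
            rw [if_neg hi] at this
            simp only [Finset.mem_singleton] at this
            omega
          · intro hi
            have := hB i
            rw [if_pos hi] at this
            exact Finset.mem_range.1 this
        refine ⟨⟨?_, by rw [hIa, hIc]⟩, hIa⟩
        intro i
        have := hB i
        split at this
        · simp only [Finset.mem_range] at this ⊢; omega
        · simp only [Finset.mem_singleton] at this; simp [this]
    rw [hset, Fintype.card_piFinset]
    have : ∀ i : Fin n, (if i ∈ I then Finset.range s else ({s} : Finset ℕ)).card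
        = if i ∈ I then s else 1 := by
      intro i; split <;> simp
    rw [Finset.prod_congr rfl (fun i _ => this i)]
    rw [Finset.prod_ite_mem, Finset.univ_inter, Finset.prod_const, hIc]
  rw [Finset.sum_congr rfl hper, Finset.sum_const, Finset.card_powersetCard,
    Finset.card_univ, Fintype.card_fin, smul_eq_mul]

private lemma count_regroup (n s : ℕ) (G : ℕ → ℕ) :
    ∑ a ∈ Fintype.piFinset (fun _ : Fin n => Finset.range (s+1)),
        G ((Finset.univ.filter (fun i => a i < s)).card)
      = ∑ t ∈ Finset.range (n+1), n.choose t * s^t * G t := by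
  have hmap : ∀ a ∈ Fintype.piFinset (fun _ : Fin n => Finset.range (s+1)),
      (Finset.univ.filter (fun i => a i < s)).card ∈ Finset.range (n+1) := by
    intro a _
    rw [Finset.mem_range]
    have := Finset.card_filter_le (Finset.univ : Finset (Fin n)) (fun i => a i < s)
    rw [Finset.card_univ, Fintype.card_fin] at this
    omega
  rw [← Finset.sum_fiberwise_of_maps_to hmap (fun a => G ((Finset.univ.filter (fun i => a i < s)).card))]
  apply Finset.sum_congr rfl
  intro t htr
  have : ∀ a ∈ (Fintype.piFinset (fun _ : Fin n => Finset.range (s+1))).filter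
      (fun a => (Finset.univ.filter (fun i => a i < s)).card = t),
      G ((Finset.univ.filter (fun i => a i < s)).card) = G t := by
    intro a ha
    rw [(Finset.mem_filter.1 ha).2]
  rw [Finset.sum_congr rfl this, Finset.sum_const, smul_eq_mul,
    pattern_card n s t (by simpa using Nat.lt_succ_iff.1 (Finset.mem_range.1 htr))]



private lemma X_le (n s e q : ℕ) (hn : 1 ≤ n) (hs : 1 ≤ s) (he : e ≤ 1) (hq : q = 2*s + e) :
    ((∑ t ∈ Finset.range (n+1), n.choose t * s^t * (e^(n-t) * (t.choose (t/2))) : ℕ) : ℝ)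
      ≤ (q:ℝ)^n * (2 / Real.sqrt n) := by
  set w : ℕ → ℝ := fun t => (n.choose t : ℝ) * (2*(s:ℝ))^t * (e:ℝ)^(n-t) with hw
  have hw0 : ∀ t, 0 ≤ w t := by intro t; rw [hw]; positivity
  have hqc : (q:ℝ) = 2*(s:ℝ) + (e:ℝ) := by exact_mod_cast congrArg (Nat.cast (R := ℝ)) hq
  -- A = q^n
  have hA : ∑ t ∈ Finset.range (n+1), w t = (q:ℝ)^n := by
    have h := add_pow (2*(s:ℝ)) (e:ℝ) n
    rw [hqc, h]
    apply Finset.sum_congr rfl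
    intro t _
    rw [hw]; ring
  -- Y bound
  have hY : (∑ t ∈ Finset.range (n+1), w t / ((t:ℝ)+1)) * (((n:ℝ)+1) * (2*(s:ℝ))) ≤ (q:ℝ)^(n+1) := by
    rw [Finset.sum_mul]
    have hterm : ∀ t ∈ Finset.range (n+1),
        w t / ((t:ℝ)+1) * (((n:ℝ)+1) * (2*(s:ℝ)))
          = (((n+1).choose (t+1) : ℝ)) * (2*(s:ℝ))^(t+1) * (e:ℝ)^(n+1-(t+1)) := by
      intro t _
      have hcc : ((n:ℝ)+1) * (n.choose t : ℝ) = ((n+1).choose (t+1) : ℝ) * ((t:ℝ)+1) := by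
        exact_mod_cast Nat.add_one_mul_choose_eq n t
      have ht1 : ((t:ℝ)+1) ≠ 0 := by positivity
      rw [Nat.succ_sub_succ]
      rw [div_mul_eq_mul_div, div_eq_iff ht1, pow_succ]
      rw [hw]
      linear_combination ((2*(s:ℝ))^t * (2*(s:ℝ)) * (e:ℝ)^(n-t)) * hcc
    rw [Finset.sum_congr rfl hterm]
    have hsplit := Finset.sum_range_succ'
      (fun j => (((n+1).choose j : ℝ)) * (2*(s:ℝ))^j * (e:ℝ)^(n+1-j)) (n+1)
    have hbin : ∑ j ∈ Finset.range (n+2), (((n+1).choose j : ℝ)) * (2*(s:ℝ))^j * (e:ℝ)^(n+1-j)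
        = (q:ℝ)^(n+1) := by
      have h := add_pow (2*(s:ℝ)) (e:ℝ) (n+1)
      rw [hqc, h]
      apply Finset.sum_congr rfl
      intro j _
      ring
    have h0 : (0:ℝ) ≤ (((n+1).choose 0 : ℝ)) * (2*(s:ℝ))^0 * (e:ℝ)^(n+1-0) := by positivity
    calc ∑ t ∈ Finset.range (n+1), (((n+1).choose (t+1) : ℝ)) * (2*(s:ℝ))^(t+1) * (e:ℝ)^(n+1-(t+1))
        ≤ ∑ j ∈ Finset.range (n+2), (((n+1).choose j : ℝ)) * (2*(s:ℝ))^j * (e:ℝ)^(n+1-j) := by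
          rw [hsplit]; linarith
      _ = (q:ℝ)^(n+1) := hbin
  -- Cauchy-Schwarz
  have hCS : (∑ t ∈ Finset.range (n+1), w t / Real.sqrt ((t:ℝ)+1))^2
      ≤ (∑ t ∈ Finset.range (n+1), w t) * (∑ t ∈ Finset.range (n+1), w t / ((t:ℝ)+1)) := by
    have h := Finset.sum_mul_sq_le_sq_mul_sq (Finset.range (n+1))
      (fun t => Real.sqrt (w t)) (fun t => Real.sqrt (w t) / Real.sqrt ((t:ℝ)+1))
    have h1 : ∀ t ∈ Finset.range (n+1),
        Real.sqrt (w t) * (Real.sqrt (w t) / Real.sqrt ((t:ℝ)+1)) = w t / Real.sqrt ((t:ℝ)+1) := by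
      intro t _
      rw [mul_div_assoc', Real.mul_self_sqrt (hw0 t)]
    have h2 : ∀ t ∈ Finset.range (n+1), Real.sqrt (w t)^2 = w t := by
      intro t _; exact Real.sq_sqrt (hw0 t)
    have h3 : ∀ t ∈ Finset.range (n+1),
        (Real.sqrt (w t) / Real.sqrt ((t:ℝ)+1))^2 = w t / ((t:ℝ)+1) := by
      intro t _
      rw [div_pow, Real.sq_sqrt (hw0 t), Real.sq_sqrt (by positivity : (0:ℝ) ≤ (t:ℝ)+1)]
    rw [Finset.sum_congr rfl h1, Finset.sum_congr rfl h2, Finset.sum_congr rfl h3] at h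
    exact h
  -- assemble
  have hnpos : (0:ℝ) < (n:ℝ) := by exact_mod_cast hn
  have hq4s : (q:ℝ) ≤ 4*(s:ℝ) := by exact_mod_cast (show q ≤ 4*s by omega)
  have hqpos : (0:ℝ) < (q:ℝ) := by exact_mod_cast (show 0 < q by omega)
  have hYle : ∑ t ∈ Finset.range (n+1), w t / ((t:ℝ)+1) ≤ (q:ℝ)^n * 2 / ((n:ℝ)+1) := by
    have hpos : (0:ℝ) < ((n:ℝ)+1) * (2*(s:ℝ)) := by positivity
    rw [← le_div_iff₀ hpos] at hY
    apply le_trans hY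
    rw [div_le_div_iff₀ hpos (by positivity : (0:ℝ) < (n:ℝ)+1)]
    have h1 : (q:ℝ)^(n+1) = (q:ℝ)^n * (q:ℝ) := pow_succ (q:ℝ) n
    rw [h1]
    calc (q:ℝ)^n * (q:ℝ) * ((n:ℝ)+1) ≤ (q:ℝ)^n * (4*(s:ℝ)) * ((n:ℝ)+1) := by gcongr
      _ = (q:ℝ)^n * 2 * (((n:ℝ)+1) * (2*(s:ℝ))) := by ring
  have hstep1 : ((∑ t ∈ Finset.range (n+1), n.choose t * s^t * (e^(n-t) * (t.choose (t/2))) : ℕ) : ℝ)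
      ≤ ∑ t ∈ Finset.range (n+1), w t / Real.sqrt ((t:ℝ)+1) := by
    push_cast
    apply Finset.sum_le_sum
    intro t _
    have hch := choose_half_le t
    calc (n.choose t : ℝ) * (s:ℝ)^t * ((e:ℝ)^(n-t) * (t.choose (t/2) : ℝ))
        ≤ (n.choose t : ℝ) * (s:ℝ)^t * ((e:ℝ)^(n-t) * (2^t / Real.sqrt ((t:ℝ)+1))) := by
          gcongr
      _ = w t / Real.sqrt ((t:ℝ)+1) := by
          simp only [hw, mul_pow]
          ring
  have hk1nn : (0:ℝ) ≤ ∑ t ∈ Finset.range (n+1), w t / Real.sqrt ((t:ℝ)+1) := by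
    apply Finset.sum_nonneg
    intro t _
    positivity
  have hRHSnn : (0:ℝ) ≤ (q:ℝ)^n * (2 / Real.sqrt n) := by positivity
  have hsq : (∑ t ∈ Finset.range (n+1), w t / Real.sqrt ((t:ℝ)+1))^2
      ≤ ((q:ℝ)^n * (2 / Real.sqrt n))^2 := by
    have hrhs : ((q:ℝ)^n * (2 / Real.sqrt n))^2 = (q:ℝ)^n * (q:ℝ)^n * 4 / (n:ℝ) := by
      rw [mul_pow, div_pow, Real.sq_sqrt (le_of_lt hnpos)]
      ring
    rw [hrhs]
    calc (∑ t ∈ Finset.range (n+1), w t / Real.sqrt ((t:ℝ)+1))^2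
        ≤ (∑ t ∈ Finset.range (n+1), w t) * (∑ t ∈ Finset.range (n+1), w t / ((t:ℝ)+1)) := hCS
      _ ≤ (q:ℝ)^n * ((q:ℝ)^n * 2 / ((n:ℝ)+1)) := by
          apply mul_le_mul (le_of_eq hA) hYle
          · apply Finset.sum_nonneg; intro t _; positivity
          · positivity
      _ = (q:ℝ)^n * (q:ℝ)^n * 2 / ((n:ℝ)+1) := by ring
      _ ≤ (q:ℝ)^n * (q:ℝ)^n * 4 / (n:ℝ) := by
          rw [div_le_div_iff₀ (by positivity) hnpos]
          have hpn : (0:ℝ) ≤ (q:ℝ)^n := by positivity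
          nlinarith [mul_nonneg hpn hpn, hnpos]
  calc ((∑ t ∈ Finset.range (n+1), n.choose t * s^t * (e^(n-t) * (t.choose (t/2))) : ℕ) : ℝ)
      ≤ ∑ t ∈ Finset.range (n+1), w t / Real.sqrt ((t:ℝ)+1) := hstep1
    _ = Real.sqrt ((∑ t ∈ Finset.range (n+1), w t / Real.sqrt ((t:ℝ)+1))^2) := (Real.sqrt_sq hk1nn).symm
    _ ≤ Real.sqrt (((q:ℝ)^n * (2 / Real.sqrt n))^2) := Real.sqrt_le_sqrt hsq
    _ = (q:ℝ)^n * (2 / Real.sqrt n) := Real.sqrt_sq hRHSnn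





private lemma main_count (q r K k : ℕ) {n : ℕ} (hn : 1 ≤ n) (hq : 2 ≤ q) (hK : K ≤ k * (q-1)) :
    ((Finset.univ.filter (fun d : Fin n → Fin q =>
        r < (∑ i, (d i:ℕ)) + K ∧ (∑ i, (d i:ℕ)) ≤ r)).card : ℝ)
      ≤ 4 * k * (q:ℝ)^n / Real.sqrt n := by
  set s := q / 2 with hs
  have hs1 : 1 ≤ s := by omega
  have he1 : q % 2 ≤ 1 := by omega
  have hq2 : q = 2*s + q % 2 := by omega
  have hmap : ∀ d ∈ Finset.univ.filter (fun d : Fin n → Fin q =>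
        r < (∑ i, (d i:ℕ)) + K ∧ (∑ i, (d i:ℕ)) ≤ r),
      (fun i => if (d i:ℕ) < 2*s then (d i:ℕ) % s else s)
        ∈ Fintype.piFinset (fun _ : Fin n => Finset.range (s+1)) := by
    intro d _
    rw [Fintype.mem_piFinset]
    intro i
    rw [Finset.mem_range]
    split
    · have := Nat.mod_lt (d i:ℕ) (show 0 < s by omega); omega
    · omega
  have hnat : (Finset.univ.filter (fun d : Fin n → Fin q =>
        r < (∑ i, (d i:ℕ)) + K ∧ (∑ i, (d i:ℕ)) ≤ r)).card ≤
      2*k * ∑ t ∈ Finset.range (n+1), n.choose t * s^t * ((q%2)^(n-t) * (t.choose (t/2))) := by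
    rw [Finset.card_eq_sum_card_fiberwise hmap]
    have hper : ∀ a ∈ Fintype.piFinset (fun _ : Fin n => Finset.range (s+1)),
        ((Finset.univ.filter (fun d : Fin n → Fin q =>
            r < (∑ i, (d i:ℕ)) + K ∧ (∑ i, (d i:ℕ)) ≤ r)).filter
          (fun d => (fun i => if (d i:ℕ) < 2*s then (d i:ℕ) % s else s) = a)).card
        ≤ (q % 2)^(n - (Finset.univ.filter (fun i => a i < s)).card) *
          (2*k * ((Finset.univ.filter (fun i => a i < s)).card.choose
                  ((Finset.univ.filter (fun i => a i < s)).card / 2))) := by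
      intro a ha
      rw [Finset.filter_filter]
      have ha' : ∀ i, a i ≤ s := by
        intro i
        have := Fintype.mem_piFinset.1 ha i
        rw [Finset.mem_range] at this
        omega
      exact fiber_card_le q s k K r hq hs hK a ha'
    calc ∑ a ∈ Fintype.piFinset (fun _ : Fin n => Finset.range (s+1)),
          ((Finset.univ.filter (fun d : Fin n → Fin q =>
            r < (∑ i, (d i:ℕ)) + K ∧ (∑ i, (d i:ℕ)) ≤ r)).filter
            (fun d => (fun i => if (d i:ℕ) < 2*s then (d i:ℕ) % s else s) = a)).card
        ≤ ∑ a ∈ Fintype.piFinset (fun _ : Fin n => Finset.range (s+1)),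
            (q % 2)^(n - (Finset.univ.filter (fun i => a i < s)).card) *
            (2*k * ((Finset.univ.filter (fun i => a i < s)).card.choose
                    ((Finset.univ.filter (fun i => a i < s)).card / 2))) :=
          Finset.sum_le_sum hper
      _ = ∑ t ∈ Finset.range (n+1), n.choose t * s^t * ((q%2)^(n-t) * (2*k*(t.choose (t/2)))) :=
          count_regroup n s (fun t => (q%2)^(n-t) * (2*k*(t.choose (t/2))))
      _ = 2*k * ∑ t ∈ Finset.range (n+1), n.choose t * s^t * ((q%2)^(n-t) * (t.choose (t/2))) := by
          rw [Finset.mul_sum]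
          apply Finset.sum_congr rfl
          intro t _
          ring
  have hreal : ((Finset.univ.filter (fun d : Fin n → Fin q =>
        r < (∑ i, (d i:ℕ)) + K ∧ (∑ i, (d i:ℕ)) ≤ r)).card : ℝ) ≤
      2*(k:ℝ) * ((q:ℝ)^n * (2 / Real.sqrt n)) := by
    calc ((Finset.univ.filter (fun d : Fin n → Fin q =>
        r < (∑ i, (d i:ℕ)) + K ∧ (∑ i, (d i:ℕ)) ≤ r)).card : ℝ)
        ≤ ((2*k * ∑ t ∈ Finset.range (n+1),
            n.choose t * s^t * ((q%2)^(n-t) * (t.choose (t/2))) : ℕ) : ℝ) := by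
          exact_mod_cast hnat
      _ = 2*(k:ℝ) * ((∑ t ∈ Finset.range (n+1),
            n.choose t * s^t * ((q%2)^(n-t) * (t.choose (t/2))) : ℕ) : ℝ) := by push_cast; ring
      _ ≤ 2*(k:ℝ) * ((q:ℝ)^n * (2 / Real.sqrt n)) := by
          apply mul_le_mul_of_nonneg_left (X_le n s (q%2) q hn hs1 he1 hq2) (by positivity)
  calc ((Finset.univ.filter (fun d : Fin n → Fin q =>
        r < (∑ i, (d i:ℕ)) + K ∧ (∑ i, (d i:ℕ)) ≤ r)).card : ℝ)
      ≤ 2*(k:ℝ) * ((q:ℝ)^n * (2 / Real.sqrt n)) := hreal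
    _ = 4 * k * (q:ℝ)^n / Real.sqrt n := by ring



/-- The rate of the generalized Reed--Muller code `RM_q(r,m)`: the fraction of
exponent vectors `d ∈ {0,...,q-1}^m` with `∑ dᵢ ≤ r`. -/
noncomputable def grmRate (q r m : ℕ) : ℝ :=
  ((Finset.univ.filter (fun d : Fin m → Fin q => ∑ i, (d i : ℕ) ≤ r)).card : ℝ) / q ^ m

/-- Lemma 7: for `q ≥ 2`, `r ≤ m(q-1)` and `0 ≤ k < m`, the GRM rates satisfy
`R_q(r, m-k) - R_q(r, m) ≤ 4k/√(m-k)`. -/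
theorem stmt_16 (q r m k : ℕ) (hq : 2 ≤ q) (hr : r ≤ m * (q - 1)) (hk : k < m) :
    grmRate q r (m - k) - grmRate q r m ≤ 4 * k / Real.sqrt ((m : ℝ) - k) := by
  set n := m - k with hn
  have hmk : m = n + k := by omega
  have hn1 : 1 ≤ n := by omega
  have hcast : ((m : ℝ) - k) = (n : ℝ) := by rw [hmk]; push_cast; ring
  rw [hcast, hmk]
  set K := k * (q - 1) with hK
  set A := Finset.univ.filter (fun d : Fin n → Fin q => ∑ i, (d i:ℕ) ≤ r) with hA
  set L := Finset.univ.filter (fun d : Fin n → Fin q => (∑ i, (d i:ℕ)) + K ≤ r) with hL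
  set S := Finset.univ.filter (fun d : Fin n → Fin q =>
    r < (∑ i, (d i:ℕ)) + K ∧ (∑ i, (d i:ℕ)) ≤ r) with hS
  have hq0 : (0:ℝ) < (q:ℝ) := by exact_mod_cast (show 0 < q by omega)
  have hqn : (0:ℝ) < (q:ℝ)^n := by positivity
  have hqk : (0:ℝ) < (q:ℝ)^k := by positivity
  -- A.card = L.card + S.card
  have hsplit : A.card = L.card + S.card := by
    rw [hA, hL, hS]
    rw [← Finset.card_union_of_disjoint (by
      rw [Finset.disjoint_left]
      intro d hd hd'
      rw [Finset.mem_filter] at hd hd'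
      omega)]
    congr 1
    ext d
    simp only [Finset.mem_union, Finset.mem_filter, Finset.mem_univ, true_and]
    omega
  -- L.card * q^k ≤ big card
  have hbig_nat : L.card * q^k ≤
      (Finset.univ.filter (fun d : Fin (n+k) → Fin q => ∑ i, (d i:ℕ) ≤ r)).card := by
    have hprod : L.card * q^k = (L ×ˢ (Finset.univ : Finset (Fin k → Fin q))).card := by
      rw [Finset.card_product, Finset.card_univ]
      congr 1
      rw [Fintype.card_fun, Fintype.card_fin, Fintype.card_fin]
    rw [hprod]
    apply Finset.card_le_card_of_injOn (fun p => Fin.append p.1 p.2)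
    · intro p hp
      rw [Finset.mem_coe, Finset.mem_product] at hp
      have hpL := hp.1
      rw [hL, Finset.mem_filter] at hpL
      rw [Finset.mem_coe, Finset.mem_filter]
      refine ⟨Finset.mem_univ _, ?_⟩
      have hsum : ∑ i : Fin (n+k), ((Fin.append p.1 p.2) i : ℕ)
          = (∑ i, (p.1 i : ℕ)) + ∑ i, (p.2 i : ℕ) := by
        rw [Fin.sum_univ_add]
        simp [Fin.append_left, Fin.append_right]
      rw [hsum]
      have hg : ∑ i, (p.2 i : ℕ) ≤ K := by
        rw [hK]
        calc ∑ i, (p.2 i : ℕ) ≤ ∑ _i : Fin k, (q-1) :=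
              Finset.sum_le_sum (fun i _ => by have := (p.2 i).isLt; omega)
          _ = k * (q-1) := by rw [Finset.sum_const, Finset.card_univ, Fintype.card_fin, smul_eq_mul]
      have := hpL.2
      omega
    · intro p hp p' hp' heq
      have heq' : Fin.append p.1 p.2 = Fin.append p'.1 p'.2 := heq
      have h1 : p.1 = p'.1 := by
        funext i
        have := congrFun heq' (Fin.castAdd k i)
        rwa [Fin.append_left, Fin.append_left] at this
      have h2 : p.2 = p'.2 := by
        funext i
        have := congrFun heq' (Fin.natAdd n i)
        rwa [Fin.append_right, Fin.append_right] at this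
      exact Prod.ext h1 h2
  have hrate_big : (L.card:ℝ)/(q:ℝ)^n ≤ grmRate q r (n+k) := by
    rw [grmRate]
    have heq : (L.card:ℝ)/(q:ℝ)^n = ((L.card * q^k : ℕ):ℝ)/(q:ℝ)^(n+k) := by
      push_cast
      rw [pow_add]
      rw [mul_div_mul_right _ _ (ne_of_gt hqk)]
    rw [heq]
    gcongr
    try exact_mod_cast hbig_nat
  have hgr : grmRate q r n = (A.card:ℝ)/(q:ℝ)^n := by rw [grmRate, hA]
  have hmain := main_count q r K k hn1 hq (le_of_eq hK)
  have hsn : (0:ℝ) < Real.sqrt n := Real.sqrt_pos.2 (by exact_mod_cast hn1)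
  have hALS : (A.card:ℝ) - L.card = S.card := by rw [hsplit]; push_cast; ring
  calc grmRate q r n - grmRate q r (n+k)
      ≤ (A.card:ℝ)/(q:ℝ)^n - (L.card:ℝ)/(q:ℝ)^n := by
        rw [hgr]
        exact sub_le_sub_left hrate_big _
    _ = (S.card:ℝ)/(q:ℝ)^n := by rw [div_sub_div_same, hALS]
    _ ≤ (4 * k * (q:ℝ)^n / Real.sqrt n)/(q:ℝ)^n := by
        gcongr
        try exact hmain
    _ = 4 * k / Real.sqrt n := by
        field_simp
        try ring
end
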